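/- arXiv:2410.18229 — 3 statements merged into one kernel-verified Lean document; each statement's English description precedes it below -/
import Mathlib

section
/- Let κ be a regular uncountable cardinal and let G = (V,E) be a graph whose vertex set V has cardinality κ. Then either G contains a countably infinite independent set of vertices, or G contains a clique whose vertex set has cardinality κ. -/
/-- Erdős–Dushnik–Miller theorem: if `κ` is a regular uncountable cardinal and `G` is a
graph on a vertex set of cardinality `κ`, then `G` has a countably infinite independent
set or a clique of cardinality `κ`. -/
theorem edm_regular (κ : Cardinal) (hreg : κ.IsRegular) (hunc : Cardinal.aleph0 < κ)
    (V : Type*) (G : SimpleGraph V) (hV : Cardinal.mk V = κ) :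
    (∃ I : Set V, (∀ x ∈ I, ∀ y ∈ I, x ≠ y → ¬ G.Adj x y) ∧
      Cardinal.mk I = Cardinal.aleph0) ∨
    (∃ C : Set V, (∀ x ∈ C, ∀ y ∈ C, x ≠ y → G.Adj x y) ∧ Cardinal.mk C = κ) := by
  classical
  have hℵ : Cardinal.aleph0 ≤ κ := hreg.aleph0_le
  by_cases H : ∀ S : Set V, Cardinal.mk S = κ →
      ∃ u ∈ S, Cardinal.mk {w : V | w ∈ S ∧ ¬ G.Adj u w ∧ w ≠ u} = κ
  · -- build a countably infinite independent set
    left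
    let Next : {S : Set V // Cardinal.mk S = κ} → {S : Set V // Cardinal.mk S = κ} :=
      fun p => ⟨{w : V | w ∈ p.1 ∧ ¬ G.Adj (Classical.choose (H p.1 p.2)) w ∧
          w ≠ Classical.choose (H p.1 p.2)},
        (Classical.choose_spec (H p.1 p.2)).2⟩
    have h0 : Cardinal.mk (Set.univ : Set V) = κ := by
      rw [Cardinal.mk_univ, hV]
    let g : ℕ → {S : Set V // Cardinal.mk S = κ} :=
      fun n => Nat.rec ⟨Set.univ, h0⟩ (fun _ p => Next p) n
    let u : ℕ → V := fun n => Classical.choose (H (g n).1 (g n).2)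
    have hmem : ∀ n, u n ∈ (g n).1 := fun n => (Classical.choose_spec (H (g n).1 (g n).2)).1
    have hstep : ∀ n, (g (n + 1)).1 = {w : V | w ∈ (g n).1 ∧ ¬ G.Adj (u n) w ∧ w ≠ u n} :=
      fun n => rfl
    have hantitone : ∀ m n, m ≤ n → (g n).1 ⊆ (g m).1 := by
      intro m n hmn
      induction n with
      | zero => simp_all
      | succ k ih =>
        rcases Nat.lt_or_ge m (k + 1) with h | h
        · intro w hw
          rw [hstep k] at hw
          exact ih (Nat.lt_succ_iff.mp h) hw.1
        · have : m = k + 1 := le_antisymm hmn h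
          subst this; exact fun _ h => h
    have hlt : ∀ m n, m < n → ¬ G.Adj (u m) (u n) ∧ u n ≠ u m := by
      intro m n hmn
      have : u n ∈ (g (m + 1)).1 := hantitone (m + 1) n hmn (hmem n)
      rw [hstep m] at this
      exact ⟨this.2.1, this.2.2⟩
    have hinj : Function.Injective u := by
      intro m n hmn
      by_contra hne
      rcases lt_trichotomy m n with h | h | h
      · exact (hlt m n h).2 hmn.symm
      · exact hne h
      · exact (hlt n m h).2 hmn
    refine ⟨Set.range u, ?_, ?_⟩
    · rintro x ⟨m, rfl⟩ y ⟨n, rfl⟩ hxy hadj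
      rcases lt_trichotomy m n with h | h | h
      · exact (hlt m n h).1 hadj
      · exact hxy (by rw [h])
      · exact (hlt n m h).1 hadj.symm
    · haveI := (Set.countable_range u).to_subtype
      haveI := (Set.infinite_range_of_injective hinj).to_subtype
      exact Cardinal.mk_eq_aleph0 _
  · -- build a clique of size κ via Zorn
    right
    push_neg at H
    obtain ⟨S, hS, hSmall⟩ := H
    -- every vertex of S has < κ non-neighbors in S
    have hSmall' : ∀ u ∈ S, Cardinal.mk {w : V | w ∈ S ∧ ¬ G.Adj u w} < κ := by
      intro v hv
      have h1 : Cardinal.mk {w : V | w ∈ S ∧ ¬ G.Adj v w ∧ w ≠ v} < κ := by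
        refine lt_of_le_of_ne ?_ (hSmall v hv)
        rw [← hS]
        exact Cardinal.mk_le_mk_of_subset fun w hw => hw.1
      have h2 : {w : V | w ∈ S ∧ ¬ G.Adj v w} ⊆
          insert v {w : V | w ∈ S ∧ ¬ G.Adj v w ∧ w ≠ v} := by
        intro w hw
        by_cases hwv : w = v
        · exact Or.inl hwv
        · exact Or.inr ⟨hw.1, hw.2, hwv⟩
      calc Cardinal.mk {w : V | w ∈ S ∧ ¬ G.Adj v w}
          ≤ Cardinal.mk (insert v {w : V | w ∈ S ∧ ¬ G.Adj v w ∧ w ≠ v} : Set V) :=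
            Cardinal.mk_le_mk_of_subset h2
        _ ≤ Cardinal.mk {w : V | w ∈ S ∧ ¬ G.Adj v w ∧ w ≠ v} + 1 := Cardinal.mk_insert_le
        _ < κ := Cardinal.add_lt_of_lt hℵ h1 (lt_of_lt_of_le Cardinal.one_lt_aleph0 hℵ)
    -- Zorn: take a maximal clique inside S
    set F : Set (Set V) := {C : Set V | C ⊆ S ∧ ∀ x ∈ C, ∀ y ∈ C, x ≠ y → G.Adj x y} with hF
    have hzorn : ∃ M, (∅ : Set V) ⊆ M ∧ Maximal (· ∈ F) M := by
      refine zorn_subset_nonempty F ?_ ∅ ⟨Set.empty_subset S, by simp⟩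
      intro c hcF hchain hcne
      refine ⟨⋃₀ c, ⟨?_, ?_⟩, fun s hs => Set.subset_sUnion_of_mem hs⟩
      · rintro x ⟨t, htc, hxt⟩
        exact (hcF htc).1 hxt
      · rintro x ⟨t1, ht1, hx1⟩ y ⟨t2, ht2, hy2⟩ hxy
        rcases eq_or_ne t1 t2 with rfl | hne
        · exact (hcF ht1).2 x hx1 y hy2 hxy
        · rcases hchain ht1 ht2 hne with h | h
          · exact (hcF ht2).2 x (h hx1) y hy2 hxy
          · exact (hcF ht1).2 x hx1 y (h hy2) hxy
    obtain ⟨M, -, hMmax⟩ := hzorn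
    have hMF : M ∈ F := hMmax.1
    refine ⟨M, hMF.2, ?_⟩
    by_contra hMκ
    have hMlt : Cardinal.mk M < κ := by
      refine lt_of_le_of_ne ?_ hMκ
      rw [← hS]
      exact Cardinal.mk_le_mk_of_subset hMF.1
    -- the set of "bad" vertices: M together with all non-neighbors in S of members of M
    set bad : Set V := M ∪ ⋃ (c : M), {w : V | w ∈ S ∧ ¬ G.Adj (c : V) w} with hbad
    have hbadlt : Cardinal.mk bad < κ := by
      have h1 : Cardinal.mk (⋃ (c : M), {w : V | w ∈ S ∧ ¬ G.Adj (c : V) w}) < κ := by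
        refine lt_of_le_of_lt Cardinal.mk_iUnion_le_sum_mk ?_
        exact Cardinal.sum_lt_of_isRegular hreg hMlt
          (fun c => hSmall' (c : V) (hMF.1 c.2))
      calc Cardinal.mk bad
          ≤ Cardinal.mk M + Cardinal.mk (⋃ (c : M), {w : V | w ∈ S ∧ ¬ G.Adj (c : V) w}) :=
            Cardinal.mk_union_le _ _
        _ < κ := Cardinal.add_lt_of_lt hℵ hMlt h1
    have hw : ∃ w ∈ S, w ∉ bad := by
      by_contra hno
      push_neg at hno
      have : Cardinal.mk S ≤ Cardinal.mk bad := Cardinal.mk_le_mk_of_subset hno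
      rw [hS] at this
      exact absurd (lt_of_le_of_lt this hbadlt) (lt_irrefl κ)
    obtain ⟨w, hwS, hwbad⟩ := hw
    have hwM : w ∉ M := fun h => hwbad (Or.inl h)
    have hwadj : ∀ c ∈ M, G.Adj c w := by
      intro c hc
      by_contra hnadj
      exact hwbad (Or.inr (Set.mem_iUnion.mpr ⟨⟨c, hc⟩, hwS, hnadj⟩))
    have hins : insert w M ∈ F := by
      constructor
      · exact Set.insert_subset hwS hMF.1
      · rintro x (rfl | hx) y (rfl | hy) hxy
        · exact absurd rfl hxy
        · exact (hwadj y hy).symm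
        · exact hwadj x hx
        · exact hMF.2 x hx y hy hxy
    have := hMmax.2 hins (Set.subset_insert w M)
    exact hwM (this (Set.mem_insert w M))
end

section
/- The symmetric group Sym(ℕ) of all permutations of a countably infinite set has no proper subgroup of finite index. -/
/-!
Let `N` be the normal core of `H`, a normal subgroup of finite index `q`; we show `N` is
everything. The shift `(a, n) ↦ (a + 1, n)` of `ℤ × ℕ` is conjugate to its own `q`-th power,
so it is a `q`-th power and all its conjugates lie in `N`. Conjugating the shift by the shear
`(a, n) ↦ (a, g a n)` multiplies it by the shear with `g (a + 1) * (g a)⁻¹`; for `g` the step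
function `a ↦ if 0 < a then π else 1` this is the permutation acting as `π` on `{0} × ℕ` and
trivially elsewhere. Hence `N` contains every permutation preserving a set `S` with `S` and its
complement infinite (it is the product of its restrictions to `S` and to the complement). Every
involution preserves such a set, and every permutation is a product of two involutions: reflect
each orbit through a base point.
-/

open Equiv

lemma Set.Infinite.exists_infinite_subset_infinite_diff {α : Type*} {s : Set α}
    (hs : s.Infinite) :
    ∃ t ⊆ s, t.Infinite ∧ (s \ t).Infinite := by
  let j : ℕ → α := fun n => (hs.natEmbedding _ n).1
  have hj : Function.Injective j := Subtype.val_injective.comp (hs.natEmbedding _).injective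
  refine ⟨Set.range fun n => j (2 * n), ?_, Set.infinite_range_of_injective ?_, ?_⟩
  · rintro _ ⟨n, rfl⟩
    exact (hs.natEmbedding _ _).2
  · intro m n h
    have := hj h
    omega
  · refine Set.Infinite.mono ?_ (Set.infinite_range_of_injective (f := fun n => j (2 * n + 1)) ?_)
    · rintro _ ⟨n, rfl⟩
      refine ⟨(hs.natEmbedding _ _).2, ?_⟩
      rintro ⟨m, hm⟩
      have := hj hm
      omega
    · intro m n h
      have := hj h
      omega

namespace SymNat

lemma ite_pos_add_one_mul_inv_ite_pos {G : Type*} [Group G] (g : G) :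
    (fun a : ℤ => (if 0 < a + 1 then g else 1) * (if 0 < a then g else 1)⁻¹) =
      fun a => if a = 0 then g else 1 := by
  ext1 a
  rcases lt_trichotomy a 0 with h | rfl | h
  · simp [h.ne, show ¬ 0 < a + 1 by omega, show ¬ 0 < a by omega]
  · simp
  · simp [h.ne', h, show 0 < a + 1 by omega]

lemma trans_permCongr {β γ δ : Type*} (f : β ≃ γ) (g : γ ≃ δ) (p : Perm β) :
    (f.trans g).permCongr p = g.permCongr (f.permCongr p) := rfl

lemma sumCongr_permCongr_sumCongr {A A' B B' : Type*} (eA : A ≃ A') (eB : B ≃ B') (σ : Perm A)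
    (τ : Perm B) :
    (eA.sumCongr eB).permCongr (σ.sumCongr τ) = (eA.permCongr σ).sumCongr (eB.permCongr τ) := by
  ext (x | x) <;> simp

section Shift

variable {Y : Type*}

def shift : Perm (ℤ × Y) := (Equiv.addRight 1).prodCongr (Equiv.refl Y)

@[simp]
lemma shift_apply (x : ℤ × Y) : shift x = (x.1 + 1, x.2) := rfl

lemma shift_pow_apply (k : ℕ) (x : ℤ × Y) : (shift ^ k) x = (x.1 + k, x.2) := by
  induction k with
  | zero => simp
  | succ k ih =>
    rw [pow_succ', Perm.mul_apply, ih, shift_apply]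
    push_cast
    ring_nf

lemma exists_pow_eq_shift {q : ℕ} (hq : q ≠ 0) : ∃ u : Perm (ℤ × ℕ), u ^ q = shift := by
  have : NeZero q := ⟨hq⟩
  let ψ : Perm (ℤ × ℕ) :=
    ((Equiv.refl ℤ).prodCongr ((Nat.divModEquiv q).trans (Equiv.prodComm _ _))).trans
      ((Equiv.prodAssoc ℤ (Fin q) ℕ).symm.trans
        ((Int.divModEquiv q).symm.prodCongr (Equiv.refl ℕ)))
  have hψ_apply (a : ℤ) (n : ℕ) : ψ (a, n) = (a * q + (n % q : ℕ), n / q) := by simp [ψ]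
  have hψ : ψ * shift = shift ^ q * ψ := by
    ext ⟨a, n⟩ <;> simp only [Perm.mul_apply, shift_apply, shift_pow_apply, hψ_apply]
    ring
  refine ⟨ψ⁻¹ * shift * ψ, ?_⟩
  have hconj := conj_pow (a := ψ⁻¹) (b := shift) (i := q)
  rw [inv_inv] at hconj
  rw [hconj, mul_assoc, ← hψ, inv_mul_cancel_left]

def shear (g : ℤ → Perm Y) : Perm (ℤ × Y) := (Equiv.refl ℤ).prodShear g

@[simp]
lemma shear_apply (g : ℤ → Perm Y) (x : ℤ × Y) : shear g x = (x.1, g x.1 x.2) := rfl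

lemma shear_mul_shift (g : ℤ → Perm Y) :
    shear g * shift = shift * shear (fun a => g (a + 1) * (g a)⁻¹) * shear g := by
  ext x <;> simp

def splitZero : ℤ × Y ≃ Y ⊕ {a : ℤ // a ≠ 0} × Y where
  toFun x := if h : x.1 = 0 then .inl x.2 else .inr (⟨x.1, h⟩, x.2)
  invFun := Sum.elim (fun y => (0, y)) (fun x => (x.1, x.2))
  left_inv := by
    rintro ⟨a, y⟩
    by_cases h : a = 0 <;> simp [h]
  right_inv := by
    rintro (y | ⟨⟨a, ha⟩, y⟩)
    · simp
    · simp [ha]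

lemma splitZero_permCongr_shear (π : Perm Y) :
    splitZero.permCongr (shear fun a => if a = 0 then π else 1) = π.sumCongr 1 := by
  ext (y | ⟨⟨a, ha⟩, y⟩)
  · simp [splitZero]
  · simp [splitZero, ha]

end Shift

section Reflection

variable {α : Type*} (σ : Perm α)

noncomputable def orbitBase (x : α) : α := (Quotient.mk (Perm.SameCycle.setoid σ) x).out

lemma sameCycle_orbitBase (x : α) : σ.SameCycle (orbitBase σ x) x :=
  Quotient.mk_out (s := Perm.SameCycle.setoid σ) x

lemma orbitBase_eq_of_sameCycle {x y : α} (h : σ.SameCycle x y) : orbitBase σ x = orbitBase σ y :=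
  congrArg Quotient.out (Quotient.sound (s := Perm.SameCycle.setoid σ) h)

/-- Reflection of each `σ`-orbit through its base point: `σ ^ k b ↦ σ ^ (-k) b`. -/
noncomputable def orbitReflect (x : α) : α :=
  (σ ^ (-(sameCycle_orbitBase σ x).choose)) (orbitBase σ x)

lemma zpow_neg_apply_eq_of_zpow_apply_eq {b : α} {k l : ℤ} (h : (σ ^ k) b = (σ ^ l) b) :
    (σ ^ (-k)) b = (σ ^ (-l)) b := by
  have := congrArg (σ ^ (-k - l)) h
  simp only [← Perm.mul_apply, ← zpow_add] at this
  rwa [show -k - l + k = -l by ring, show -k - l + l = -k by ring, eq_comm] at this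

lemma orbitReflect_eq {x : α} {k : ℤ} (hk : (σ ^ k) (orbitBase σ x) = x) :
    orbitReflect σ x = (σ ^ (-k)) (orbitBase σ x) :=
  zpow_neg_apply_eq_of_zpow_apply_eq σ ((sameCycle_orbitBase σ x).choose_spec.trans hk.symm)

lemma orbitReflect_involutive : Function.Involutive (orbitReflect σ) := by
  intro x
  obtain ⟨k, hk⟩ := sameCycle_orbitBase σ x
  have hy := (orbitReflect_eq σ hk).symm
  have hbase : orbitBase σ (orbitReflect σ x) = orbitBase σ x :=
    (orbitBase_eq_of_sameCycle σ ((sameCycle_orbitBase σ x).symm.trans ⟨-k, hy⟩)).symm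
  rw [← hbase] at hy
  rw [orbitReflect_eq σ hy, neg_neg, hbase, hk]

lemma orbitReflect_apply (x : α) : orbitReflect σ (σ x) = σ⁻¹ (orbitReflect σ x) := by
  obtain ⟨k, hk⟩ := sameCycle_orbitBase σ x
  have hbase : orbitBase σ (σ x) = orbitBase σ x :=
    (orbitBase_eq_of_sameCycle σ (Perm.sameCycle_apply_right.mpr .rfl)).symm
  have hσx : (σ ^ (k + 1)) (orbitBase σ (σ x)) = σ x := by
    rw [hbase, add_comm, zpow_add, zpow_one, Perm.mul_apply, hk]
  rw [orbitReflect_eq σ hσx, orbitReflect_eq σ hk, hbase, neg_add_rev, zpow_add, zpow_neg_one,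
    Perm.mul_apply]

lemma exists_involutive_involutive_mul :
    ∃ ρ : Perm α, Function.Involutive ρ ∧ Function.Involutive ⇑(ρ * σ) := by
  refine ⟨(orbitReflect_involutive σ).toPerm, orbitReflect_involutive σ, fun x => ?_⟩
  simp [orbitReflect_apply, orbitReflect_involutive σ _]

end Reflection

lemma exists_invariant_split_of_involutive {α : Type*} [Infinite α] {κ : α → α}
    (hκ : Function.Involutive κ) :
    ∃ p : α → Prop, (∀ x, p (κ x) ↔ p x) ∧ {x | p x}.Infinite ∧ {x | ¬p x}.Infinite := by
  let f : α → Set α := fun x => {x, κ x}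
  have hf : ∀ x, f (κ x) = f x := fun x => by simp only [f, hκ x, Set.pair_comm]
  have hrange : (Set.range f).Infinite := fun hfin => Set.infinite_univ (α := α) <|
    (hfin.sUnion (by rintro _ ⟨x, rfl⟩; exact Set.toFinite _)).subset
      fun x _ => ⟨f x, ⟨x, rfl⟩, Or.inl rfl⟩
  obtain ⟨t, hts, ht, hst⟩ := hrange.exists_infinite_subset_infinite_diff
  refine ⟨(· ∈ f ⁻¹' t), fun x => by simp only [Set.mem_preimage, hf], ?_, ?_⟩
  · refine Set.Infinite.of_image f ?_
    rwa [Set.ofPred_mem_eq, Set.image_preimage_eq_of_subset hts]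
  · refine Set.Infinite.of_image f ?_
    change (f '' (f ⁻¹' tᶜ)).Infinite
    rwa [Set.image_preimage_eq_range_inter, ← Set.sdiff_eq]

section Normal

variable {α : Type*} {N : Subgroup (Perm α)} [N.Normal]

lemma permCongr_shift_mem (hN : N.index ≠ 0) (e : ℤ × ℕ ≃ α) : e.permCongr shift ∈ N := by
  obtain ⟨u, hu⟩ := exists_pow_eq_shift hN
  rw [← hu, ← permCongrHom_coe, map_pow]
  exact N.pow_index_mem _

lemma permCongr_shear_mem (hN : N.index ≠ 0) (e : ℤ × ℕ ≃ α) (g : ℤ → Perm ℕ) :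
    e.permCongr (shear fun a => g (a + 1) * (g a)⁻¹) ∈ N := by
  have hshear :
      (shear fun a => g (a + 1) * (g a)⁻¹) = shift⁻¹ * (shear g * shift * (shear g)⁻¹) := by
    rw [shear_mul_shift]; group
  have hconj :
      e.permCongr (shear g * shift * (shear g)⁻¹) = ((shear g).trans e).permCongr shift := by
    ext x; simp
  rw [hshear, permCongr_mul, hconj, ← permCongrHom_coe, map_inv, permCongrHom_coe]
  exact N.mul_mem (N.inv_mem (permCongr_shift_mem hN e)) (permCongr_shift_mem hN _)

lemma permCongr_sumCongr_one_mem (hN : N.index ≠ 0) {A B : Type*} [Countable A] [Infinite A]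
    [Countable B] [Infinite B] (e : A ⊕ B ≃ α) (π : Perm A) : e.permCongr (π.sumCongr 1) ∈ N := by
  have : Nonempty {a : ℤ // a ≠ 0} := ⟨⟨1, one_ne_zero⟩⟩
  obtain ⟨eA⟩ : Nonempty (ℕ ≃ A) := inferInstance
  obtain ⟨eB⟩ : Nonempty ({a : ℤ // a ≠ 0} × ℕ ≃ B) := inferInstance
  have hmem := permCongr_shear_mem hN (splitZero.trans ((eA.sumCongr eB).trans e))
    (fun a => if 0 < a then eA.symm.permCongr π else 1)
  rw [ite_pos_add_one_mul_inv_ite_pos] at hmem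
  rwa [trans_permCongr, trans_permCongr, splitZero_permCongr_shear, sumCongr_permCongr_sumCongr,
    ← permCongr_symm, apply_symm_apply, Perm.one_def, permCongr_refl] at hmem

lemma mem_of_invariant_split (hN : N.index ≠ 0) [Countable α] {σ : Perm α} {p : α → Prop}
    (hσ : ∀ x, p (σ x) ↔ p x) (hp : {x | p x}.Infinite) (hnp : {x | ¬p x}.Infinite) : σ ∈ N := by
  classical
  have : Infinite {x // p x} := hp.to_subtype
  have : Infinite {x // ¬p x} := hnp.to_subtype
  have hsplit : σ = (sumCompl p).permCongr ((σ.subtypePerm hσ).sumCongr 1) *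
      ((sumComm _ _).trans (sumCompl p)).permCongr
        ((σ.subtypePerm fun x => not_congr (hσ x)).sumCongr 1) := by
    ext x
    by_cases hx : p x <;> simp [hx, hσ]
  rw [hsplit]
  exact N.mul_mem (permCongr_sumCongr_one_mem hN _ _) (permCongr_sumCongr_one_mem hN _ _)

lemma mem_of_involutive (hN : N.index ≠ 0) [Countable α] [Infinite α] {κ : Perm α}
    (hκ : Function.Involutive κ) : κ ∈ N :=
  let ⟨_, hp, hpinf, hnpinf⟩ := exists_invariant_split_of_involutive hκ
  mem_of_invariant_split hN hp hpinf hnpinf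

lemma eq_top_of_index_ne_zero (hN : N.index ≠ 0) [Countable α] [Infinite α] : N = ⊤ := by
  refine eq_top_iff.mpr fun σ _ => ?_
  obtain ⟨ρ, hρ, hρσ⟩ := exists_involutive_involutive_mul σ
  have hσ : σ = ρ * (ρ * σ) := by rw [← mul_assoc, show ρ * ρ = 1 from Equiv.ext hρ, one_mul]
  rw [hσ]
  exact N.mul_mem (mem_of_involutive hN hρ) (mem_of_involutive hN hρσ)

end Normal

end SymNat

/-- The symmetric group on a countably infinite set has no proper subgroup of finite
index. -/
theorem symNat_no_proper_finite_index (H : Subgroup (Equiv.Perm ℕ)) (hH : H ≠ ⊤) :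
    H.index = 0 := by
  by_contra hH0
  have : H.FiniteIndex := ⟨hH0⟩
  have hcore : H.normalCore = ⊤ :=
    SymNat.eq_top_of_index_ne_zero Subgroup.FiniteIndex.index_ne_zero
  exact hH (top_le_iff.mp (hcore ▸ H.normalCore_le))
end

section
/- Let (P, ≤) be a partially ordered set in which every antichain is finite and every chain is countable. Then P is countable. -/
open Set

/-- Key step: in an uncountable subset `S` of a poset with countable chains, there is
`c ∈ S` such that the set of elements of `S` incomparable to `c` is uncountable. -/
private lemma kurepa_key {P : Type*} [PartialOrder P]
    (hchain : ∀ C : Set P, IsChain (· ≤ ·) C → C.Countable)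
    (S : Set P) (hS : ¬ S.Countable) :
    ∃ c ∈ S, ¬ (S ∩ {x | ¬ c ≤ x ∧ ¬ x ≤ c}).Countable := by
  -- take a maximal chain inside S
  have hub : ∀ 𝒞 ⊆ {C : Set P | C ⊆ S ∧ IsChain (· ≤ ·) C}, IsChain (· ⊆ ·) 𝒞 →
      ∃ ub ∈ {C : Set P | C ⊆ S ∧ IsChain (· ≤ ·) C}, ∀ s ∈ 𝒞, s ⊆ ub := by
    intro 𝒞 h𝒞S h𝒞chain
    refine ⟨⋃₀ 𝒞, ⟨?_, ?_⟩, fun s hs => subset_sUnion_of_mem hs⟩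
    · exact sUnion_subset fun t ht => (h𝒞S ht).1
    · intro x hx y hy hxy
      obtain ⟨s, hs, hxs⟩ := hx
      obtain ⟨t, ht, hyt⟩ := hy
      rcases h𝒞chain.total hs ht with hst | hts
      · exact (h𝒞S ht).2 (hst hxs) hyt hxy
      · exact (h𝒞S hs).2 hxs (hts hyt) hxy
  obtain ⟨C, hCmax⟩ := zorn_subset {C : Set P | C ⊆ S ∧ IsChain (· ≤ ·) C} hub
  · obtain ⟨hCS, hCchain⟩ := hCmax.prop
    by_contra hcon
    push_neg at hcon
    -- every element of S is in C or incomparable to some element of C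
    have hcover : S ⊆ C ∪ ⋃ c ∈ C, (S ∩ {x | ¬ c ≤ x ∧ ¬ x ≤ c}) := by
      intro x hxS
      by_cases hxC : x ∈ C
      · exact Or.inl hxC
      · right
        by_contra hx
        simp only [mem_iUnion, mem_inter_iff, not_exists, not_and] at hx
        -- then C ∪ {x} is a chain in S, contradicting maximality
        have hcomp : ∀ c ∈ C, c ≤ x ∨ x ≤ c := by
          intro c hc
          have := hx c hc
          by_contra hn
          push_neg at hn
          exact this hxS ⟨hn.1, hn.2⟩
        have hmem : insert x C ∈ {C : Set P | C ⊆ S ∧ IsChain (· ≤ ·) C} := by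
          constructor
          · exact insert_subset hxS hCS
          · exact hCchain.insert (fun c hc _ => (hcomp c hc).symm.imp id id)
        have := hCmax.eq_of_le hmem (subset_insert x C)
        exact hxC (this ▸ mem_insert x C)
    -- but the right side is countable
    have hCc : C.Countable := hchain C hCchain
    have : (C ∪ ⋃ c ∈ C, (S ∩ {x | ¬ c ≤ x ∧ ¬ x ≤ c})).Countable :=
      hCc.union (hCc.biUnion fun c hc => hcon c (hCS hc))
    exact hS (Set.Countable.mono hcover this)

/-- Kurepa's theorem: a poset in which every antichain is finite and every chain is
countable is countable. -/
theorem kurepa {P : Type*} [PartialOrder P]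
    (hanti : ∀ A : Set P, IsAntichain (· ≤ ·) A → A.Finite)
    (hchain : ∀ C : Set P, IsChain (· ≤ ·) C → C.Countable) :
    Countable P := by
  by_contra hP
  have huniv : ¬ (Set.univ : Set P).Countable := by
    rwa [Set.countable_univ_iff]
  -- iterate the key lemma
  let T := {S : Set P // ¬ S.Countable}
  let step : T → P × T := fun S =>
    ⟨(kurepa_key hchain S.1 S.2).choose,
     ⟨S.1 ∩ {x | ¬ (kurepa_key hchain S.1 S.2).choose ≤ x ∧
                 ¬ x ≤ (kurepa_key hchain S.1 S.2).choose},
      (kurepa_key hchain S.1 S.2).choose_spec.2⟩⟩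
  let f : ℕ → T := fun n => Nat.rec ⟨Set.univ, huniv⟩ (fun _ t => (step t).2) n
  let c : ℕ → P := fun n => (step (f n)).1
  have hcmem : ∀ n, c n ∈ (f n).1 := fun n =>
    (kurepa_key hchain (f n).1 (f n).2).choose_spec.1
  have hsucc : ∀ n, (f (n + 1)).1 ⊆ (f n).1 ∩ {x | ¬ c n ≤ x ∧ ¬ x ≤ c n} :=
    fun n => le_refl _
  have hmono : ∀ m n, m ≤ n → (f n).1 ⊆ (f m).1 := by
    intro m n hmn
    induction n with
    | zero => simp_all
    | succ k ih =>
      rcases Nat.lt_or_ge m (k + 1) with h | h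
      · exact ((hsucc k).trans (inter_subset_left)).trans (ih (Nat.lt_succ_iff.mp h))
      · have : m = k + 1 := le_antisymm hmn h
        subst this; exact subset_rfl
  have hinc : ∀ m n, m < n → ¬ c m ≤ c n ∧ ¬ c n ≤ c m := by
    intro m n hmn
    have h1 : (f n).1 ⊆ (f (m + 1)).1 := hmono (m + 1) n hmn
    have h2 := (hsucc m) (h1 (hcmem n))
    exact h2.2
  have hA : IsAntichain (· ≤ ·) (Set.range c) := by
    rintro _ ⟨m, rfl⟩ _ ⟨n, rfl⟩ hne
    rcases Nat.lt_or_ge m n with h | h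
    · exact (hinc m n h).1
    · rcases Nat.lt_or_ge n m with h' | h'
      · exact (hinc n m h').2
      · exact absurd (le_antisymm h' h ▸ rfl) hne
  have hinj : Function.Injective c := by
    intro m n hmn
    by_contra hne
    rcases Nat.lt_or_ge m n with h | h
    · exact (hinc m n h).1 (hmn ▸ le_refl _)
    · exact (hinc n m (lt_of_le_of_ne h (Ne.symm hne))).1 (hmn ▸ le_refl _)
  exact (Set.infinite_range_of_injective hinj) (hanti _ hA)
end
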